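/- With M = BᵀB + (γ/2)((Bᵀ)² − B²) + (1/2)I acting on finitely supported sequences, the operators D and D‡ defined as linear combinations of B and Bᵀ satisfy [M, D‡] = √(1+γ²) D‡ and [M, D] = −√(1+γ²) D. -/
import Mathlib


noncomputable section

/-- the lowering shift operator `B` on sequences: `(Bc)ₙ = √(n+1) cₙ₊₁`. -/
def shiftB (c : ℕ → ℂ) : ℕ → ℂ := fun n => (Real.sqrt (n + 1) : ℂ) * c (n + 1)

/-- the raising shift operator `Bᵀ` on sequences: `(Bᵀc)ₙ = √n cₙ₋₁`, `(Bᵀc)₀ = 0`. -/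
def shiftBT (c : ℕ → ℂ) : ℕ → ℂ := fun n => (Real.sqrt n : ℂ) * c (n - 1)

/-- the operator M = BᵀB + (γ/2)((Bᵀ)² − B²) + (1/2)I. -/
def opM (γ : ℝ) (c : ℕ → ℂ) : ℕ → ℂ := fun n =>
  shiftBT (shiftB c) n + ((γ : ℂ) / 2) * (shiftBT (shiftBT c) n - shiftB (shiftB c) n)
    + (1 / 2) * c n

/-- the lowering operator `D`. -/
def opD (γ : ℝ) (c : ℕ → ℂ) : ℕ → ℂ := fun n =>
  (((1 / 2) * ((1 + γ ^ 2) ^ ((1 : ℝ) / 4) + (1 + γ) * (1 + γ ^ 2) ^ (-(1 : ℝ) / 4)) : ℝ) : ℂ)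
      * shiftB c n
    + (((1 / 2) * ((1 + γ ^ 2) ^ ((1 : ℝ) / 4) - (1 - γ) * (1 + γ ^ 2) ^ (-(1 : ℝ) / 4)) : ℝ) : ℂ)
      * shiftBT c n

/-- the raising operator `D‡`. -/
def opDdag (γ : ℝ) (c : ℕ → ℂ) : ℕ → ℂ := fun n =>
  (((1 / 2) * ((1 + γ ^ 2) ^ ((1 : ℝ) / 4) - (1 + γ) * (1 + γ ^ 2) ^ (-(1 : ℝ) / 4)) : ℝ) : ℂ)
      * shiftB c n
    + (((1 / 2) * ((1 + γ ^ 2) ^ ((1 : ℝ) / 4) + (1 - γ) * (1 + γ ^ 2) ^ (-(1 : ℝ) / 4)) : ℝ) : ℂ)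
      * shiftBT c n

lemma sqC (x : ℝ) (hx : 0 ≤ x) : (Real.sqrt x : ℂ) * Real.sqrt x = (x : ℂ) := by
  rw [← Complex.ofReal_mul, Real.mul_self_sqrt hx]

lemma commB (γ : ℝ) (c : ℕ → ℂ) (n : ℕ) :
    opM γ (shiftB c) n - shiftB (opM γ c) n = -(shiftB c n) - (γ : ℂ) * shiftBT c n := by
  have hm : ∀ k : ℕ, (0:ℝ) ≤ (k:ℝ) := fun k => Nat.cast_nonneg k
  match n with
  | 0 => simp [opM, shiftB, shiftBT]
  | 1 =>
    have h2 := sqC 2 (by norm_num)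
    have h3 := sqC 3 (by norm_num)
    push_cast at h2 h3
    simp only [opM, shiftB, shiftBT]
    norm_num [Real.sqrt_one]
    ring_nf
    simp only [pow_two, pow_three, h2, h3]
    try ring
  | (m+2) =>
    have h1 := sqC (1+(m:ℝ)) (by linarith [hm m])
    have h2 := sqC (2+(m:ℝ)) (by linarith [hm m])
    have h3 := sqC (3+(m:ℝ)) (by linarith [hm m])
    push_cast at h1 h2 h3
    simp only [opM, shiftB, shiftBT, Nat.add_sub_cancel]
    push_cast
    ring_nf
    simp only [pow_two, pow_three, h1, h2, h3]
    try ring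

lemma commBT (γ : ℝ) (c : ℕ → ℂ) (n : ℕ) :
    opM γ (shiftBT c) n - shiftBT (opM γ c) n = shiftBT c n - (γ : ℂ) * shiftB c n := by
  have hm : ∀ k : ℕ, (0:ℝ) ≤ (k:ℝ) := fun k => Nat.cast_nonneg k
  match n with
  | 0 =>
    have h2 := sqC 2 (by norm_num)
    push_cast at h2
    simp only [opM, shiftB, shiftBT]
    norm_num [Real.sqrt_one]
    ring_nf
    simp only [pow_two, pow_three, h2]
    try ring
  | 1 =>
    have h2 := sqC 2 (by norm_num)
    have h3 := sqC 3 (by norm_num)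
    push_cast at h2 h3
    simp only [opM, shiftB, shiftBT]
    norm_num [Real.sqrt_one]
    ring_nf
    simp only [pow_two, pow_three, h2, h3]
    try ring
  | (m+2) =>
    have h1 := sqC (1+(m:ℝ)) (by linarith [hm m])
    have h2 := sqC (2+(m:ℝ)) (by linarith [hm m])
    have h3 := sqC (3+(m:ℝ)) (by linarith [hm m])
    have h4 := sqC (4+(m:ℝ)) (by linarith [hm m])
    push_cast at h1 h2 h3 h4
    simp only [opM, shiftB, shiftBT, Nat.add_sub_cancel]
    push_cast
    ring_nf
    simp only [pow_two, pow_three, h1, h2, h3, h4]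
    try ring

lemma opM_lin (γ : ℝ) (u v : ℕ → ℂ) (a b : ℂ) (n : ℕ) :
    opM γ (fun k => a * u k + b * v k) n = a * opM γ u n + b * opM γ v n := by
  simp only [opM, shiftB, shiftBT]
  ring

lemma rpow_facts (γ : ℝ) :
    (1 + γ ^ 2) ^ ((1 : ℝ) / 4) * (1 + γ ^ 2) ^ (-(1 : ℝ) / 4) = 1 ∧
    (1 + γ ^ 2) ^ ((1 : ℝ) / 4) * (1 + γ ^ 2) ^ ((1 : ℝ) / 4) = Real.sqrt (1 + γ ^ 2) ∧
    ((1 + γ ^ 2) ^ ((1 : ℝ) / 4)) ^ 4 = 1 + γ ^ 2 := by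
  have hpos : (0:ℝ) < 1 + γ ^ 2 := by positivity
  refine ⟨?_, ?_, ?_⟩
  · rw [← Real.rpow_add hpos]; norm_num
  · rw [← Real.rpow_add hpos, Real.sqrt_eq_rpow]; norm_num
  · rw [← Real.rpow_natCast ((1 + γ ^ 2) ^ ((1 : ℝ) / 4)) 4, ← Real.rpow_mul hpos.le]
    norm_num

theorem M_raising_lowering (γ : ℝ) (c : ℕ → ℂ) (hc : (Function.support c).Finite) :
    (∀ n : ℕ, opM γ (opDdag γ c) n - opDdag γ (opM γ c) n
        = (Real.sqrt (1 + γ ^ 2) : ℂ) * opDdag γ c n) ∧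
    (∀ n : ℕ, opM γ (opD γ c) n - opD γ (opM γ c) n
        = -(Real.sqrt (1 + γ ^ 2) : ℂ) * opD γ c n) := by
  obtain ⟨h1, h2, h3⟩ := rpow_facts γ
  set t : ℝ := (1 + γ ^ 2) ^ ((1 : ℝ) / 4) with ht
  set u : ℝ := (1 + γ ^ 2) ^ (-(1 : ℝ) / 4) with hu
  constructor
  · intro n
    set a : ℝ := (1 / 2) * (t - (1 + γ) * u) with ha
    set b : ℝ := (1 / 2) * (t + (1 - γ) * u) with hb
    have hD : opDdag γ c = fun k => (a:ℂ) * shiftB c k + (b:ℂ) * shiftBT c k := rfl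
    have key : opM γ (opDdag γ c) n - opDdag γ (opM γ c) n
        = (a:ℂ) * (opM γ (shiftB c) n - shiftB (opM γ c) n)
          + (b:ℂ) * (opM γ (shiftBT c) n - shiftBT (opM γ c) n) := by
      rw [hD, opM_lin]
      simp only [opDdag]
      ring
    rw [key, commB, commBT, hD]
    have e1 : -(a:ℂ) - (γ:ℂ) * (b:ℂ) = (Real.sqrt (1 + γ ^ 2) : ℂ) * (a:ℂ) := by
      rw [← h2]
      push_cast [ha, hb]
      have h1' : (t:ℂ) * (u:ℂ) = 1 := by exact_mod_cast congrArg Complex.ofReal h1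
      have h3' : (t:ℂ) ^ 4 = 1 + (γ:ℂ) ^ 2 := by exact_mod_cast congrArg Complex.ofReal h3
      linear_combination ((1+(γ:ℂ))*(t:ℂ)/2 - (t:ℂ)^3/2 + (t:ℂ)^3) * h1' - ((u:ℂ)/2) * h3'
    have e2 : (b:ℂ) - (γ:ℂ) * (a:ℂ) = (Real.sqrt (1 + γ ^ 2) : ℂ) * (b:ℂ) := by
      rw [← h2]
      push_cast [ha, hb]
      have h1' : (t:ℂ) * (u:ℂ) = 1 := by exact_mod_cast congrArg Complex.ofReal h1
      have h3' : (t:ℂ) ^ 4 = 1 + (γ:ℂ) ^ 2 := by exact_mod_cast congrArg Complex.ofReal h3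
      linear_combination ((1-(γ:ℂ))*(t:ℂ)/2 - (t:ℂ)^3/2 + (γ:ℂ)*(t:ℂ) - (t:ℂ) + (t:ℂ)^3) * h1' - ((u:ℂ)/2) * h3'
    calc (a:ℂ) * (-(shiftB c n) - (γ:ℂ) * shiftBT c n)
          + (b:ℂ) * (shiftBT c n - (γ:ℂ) * shiftB c n)
        = (-(a:ℂ) - (γ:ℂ)*(b:ℂ)) * shiftB c n + ((b:ℂ) - (γ:ℂ)*(a:ℂ)) * shiftBT c n := by ring
      _ = (Real.sqrt (1 + γ ^ 2) : ℂ) * ((a:ℂ) * shiftB c n + (b:ℂ) * shiftBT c n) := by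
          rw [e1, e2]; ring
  · intro n
    set a : ℝ := (1 / 2) * (t + (1 + γ) * u) with ha
    set b : ℝ := (1 / 2) * (t - (1 - γ) * u) with hb
    have hD : opD γ c = fun k => (a:ℂ) * shiftB c k + (b:ℂ) * shiftBT c k := rfl
    have key : opM γ (opD γ c) n - opD γ (opM γ c) n
        = (a:ℂ) * (opM γ (shiftB c) n - shiftB (opM γ c) n)
          + (b:ℂ) * (opM γ (shiftBT c) n - shiftBT (opM γ c) n) := by
      rw [hD, opM_lin]
      simp only [opD]
      ring
    rw [key, commB, commBT, hD]
    have e1 : -(a:ℂ) - (γ:ℂ) * (b:ℂ) = -(Real.sqrt (1 + γ ^ 2) : ℂ) * (a:ℂ) := by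
      rw [← h2]
      push_cast [ha, hb]
      have h1' : (t:ℂ) * (u:ℂ) = 1 := by exact_mod_cast congrArg Complex.ofReal h1
      have h3' : (t:ℂ) ^ 4 = 1 + (γ:ℂ) ^ 2 := by exact_mod_cast congrArg Complex.ofReal h3
      linear_combination (-(1+(γ:ℂ))*(t:ℂ)/2 + (t:ℂ)^3/2 - (t:ℂ)^3 + (γ:ℂ)*(t:ℂ) + (t:ℂ)) * h1' + ((u:ℂ)/2) * h3'
    have e2 : (b:ℂ) - (γ:ℂ) * (a:ℂ) = -(Real.sqrt (1 + γ ^ 2) : ℂ) * (b:ℂ) := by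
      rw [← h2]
      push_cast [ha, hb]
      have h1' : (t:ℂ) * (u:ℂ) = 1 := by exact_mod_cast congrArg Complex.ofReal h1
      have h3' : (t:ℂ) ^ 4 = 1 + (γ:ℂ) ^ 2 := by exact_mod_cast congrArg Complex.ofReal h3
      linear_combination (-(1-(γ:ℂ))*(t:ℂ)/2 + (t:ℂ)^3/2 - (t:ℂ)^3) * h1' + ((u:ℂ)/2) * h3'
    calc (a:ℂ) * (-(shiftB c n) - (γ:ℂ) * shiftBT c n)
          + (b:ℂ) * (shiftBT c n - (γ:ℂ) * shiftB c n)
        = (-(a:ℂ) - (γ:ℂ)*(b:ℂ)) * shiftB c n + ((b:ℂ) - (γ:ℂ)*(a:ℂ)) * shiftBT c n := by ring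
      _ = -(Real.sqrt (1 + γ ^ 2) : ℂ) * ((a:ℂ) * shiftB c n + (b:ℂ) * shiftBT c n) := by
          rw [e1, e2]; ring
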